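/- For the surface of revolution r(u,v) = (u sinh v, u cosh v, f(u)), u > 0, in the semi-isotropic space, the second fundamental form components are L = −f''(u), M = 0, N = u f'(u), and hence LN − M² = −u f'(u) f''(u); in particular the surface has no parabolic points (LN − M² ≠ 0) if and only if f'(u) f''(u) ≠ 0 for all u > 0. -/

import Mathlib

/-- The (degenerate) semi-isotropic scalar product on `ℝ³ = ℝ × ℝ × ℝ`:
`⟨a, b⟩ = a₁b₁ − a₂b₂`. -/
noncomputable def sip (a b : ℝ × ℝ × ℝ) : ℝ := a.1 * b.1 - a.2.1 * b.2.1

/-- A triple viewed as a `Fin 3 → ℝ` vector. -/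
noncomputable def vec3 (a : ℝ × ℝ × ℝ) : Fin 3 → ℝ := ![a.1, a.2.1, a.2.2]

/-- Determinant of the 3×3 matrix with the given rows. -/
noncomputable def det3 (x y z : ℝ × ℝ × ℝ) : ℝ :=
  Matrix.det (Matrix.of ![vec3 x, vec3 y, vec3 z])

/-- The surface of revolution `r(u,v) = (u sinh v, u cosh v, f(u))`. -/
noncomputable def rmap (f : ℝ → ℝ) (u v : ℝ) : ℝ × ℝ × ℝ :=
  (u * Real.sinh v, u * Real.cosh v, f u)

noncomputable def r_u (f : ℝ → ℝ) (u v : ℝ) : ℝ × ℝ × ℝ :=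
  deriv (fun t => rmap f t v) u

noncomputable def r_v (f : ℝ → ℝ) (u v : ℝ) : ℝ × ℝ × ℝ :=
  deriv (fun t => rmap f u t) v

noncomputable def r_uu (f : ℝ → ℝ) (u v : ℝ) : ℝ × ℝ × ℝ :=
  deriv (fun t => r_u f t v) u

noncomputable def r_uv (f : ℝ → ℝ) (u v : ℝ) : ℝ × ℝ × ℝ :=
  deriv (fun t => r_u f u t) v

noncomputable def r_vv (f : ℝ → ℝ) (u v : ℝ) : ℝ × ℝ × ℝ :=
  deriv (fun t => r_v f u t) v

/-- `W = EG − F²` for the surface of revolution. -/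
noncomputable def Wc (f : ℝ → ℝ) (u v : ℝ) : ℝ :=
  sip (r_u f u v) (r_u f u v) * sip (r_v f u v) (r_v f u v) -
    (sip (r_u f u v) (r_v f u v)) ^ 2

/-- Second fundamental form components `L, M, N`. -/
noncomputable def Lc (f : ℝ → ℝ) (u v : ℝ) : ℝ :=
  det3 (r_uu f u v) (r_u f u v) (r_v f u v) / Real.sqrt |Wc f u v|
noncomputable def Mc (f : ℝ → ℝ) (u v : ℝ) : ℝ :=
  det3 (r_uv f u v) (r_u f u v) (r_v f u v) / Real.sqrt |Wc f u v|
noncomputable def Nc (f : ℝ → ℝ) (u v : ℝ) : ℝ :=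
  det3 (r_vv f u v) (r_u f u v) (r_v f u v) / Real.sqrt |Wc f u v|

/-- For the surface of revolution `r(u,v) = (u sinh v, u cosh v, f(u))`, `u > 0`, the
second fundamental form components are `L = −f''(u)`, `M = 0`, `N = u f'(u)`, hence
`LN − M² = −u f'(u) f''(u)`; in particular the surface has no parabolic points iff
`f'(u) f''(u) ≠ 0` for all `u > 0`. -/
theorem surface_of_revolution_second_fundamental_form
    (f : ℝ → ℝ) (hf : ContDiff ℝ (⊤ : ℕ∞) f) :
    (∀ u ∈ Set.Ioi (0 : ℝ), ∀ v : ℝ,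
      Lc f u v = -(deriv (deriv f) u) ∧
      Mc f u v = 0 ∧
      Nc f u v = u * deriv f u ∧
      Lc f u v * Nc f u v - (Mc f u v) ^ 2 = -u * deriv f u * deriv (deriv f) u) ∧
    ((∀ u ∈ Set.Ioi (0 : ℝ), ∀ v : ℝ, Lc f u v * Nc f u v - (Mc f u v) ^ 2 ≠ 0) ↔
      (∀ u ∈ Set.Ioi (0 : ℝ), deriv f u * deriv (deriv f) u ≠ 0)) := by

  have hf1 : Differentiable ℝ f := hf.differentiable (by simp)
  have hfi : ContDiff ℝ ((⊤ : ℕ∞) : WithTop ℕ∞) f := hf.of_le (by simp)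
  have hf'1 : Differentiable ℝ (deriv f) :=
    ((contDiff_infty_iff_deriv.mp hfi).2).differentiable (by simp)
  have hru : ∀ u v : ℝ, r_u f u v = (Real.sinh v, Real.cosh v, deriv f u) := by
    intro u v
    have h : HasDerivAt (fun t => rmap f t v)
        (Real.sinh v, Real.cosh v, deriv f u) u := by
      unfold rmap
      exact (hasDerivAt_mul_const _).prodMk
        ((hasDerivAt_mul_const _).prodMk (hf1 u).hasDerivAt)
    exact h.deriv
  have hrv : ∀ u v : ℝ, r_v f u v = (u * Real.cosh v, u * Real.sinh v, 0) := by
    intro u v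
    have h : HasDerivAt (fun t => rmap f u t)
        (u * Real.cosh v, u * Real.sinh v, 0) v := by
      unfold rmap
      exact ((Real.hasDerivAt_sinh v).const_mul u).prodMk
        (((Real.hasDerivAt_cosh v).const_mul u).prodMk (hasDerivAt_const _ _))
    exact h.deriv
  have hruu : ∀ u v : ℝ, r_uu f u v = (0, 0, deriv (deriv f) u) := by
    intro u v
    have heq : (fun t => r_u f t v) = fun t => (Real.sinh v, Real.cosh v, deriv f t) :=
      funext fun t => hru t v
    have h : HasDerivAt (fun t => (Real.sinh v, Real.cosh v, deriv f t))
        (0, 0, deriv (deriv f) u) u :=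
      (hasDerivAt_const _ _).prodMk ((hasDerivAt_const _ _).prodMk (hf'1 u).hasDerivAt)
    rw [r_uu, heq]; exact h.deriv
  have hruv : ∀ u v : ℝ, r_uv f u v = (Real.cosh v, Real.sinh v, 0) := by
    intro u v
    have heq : (fun t => r_u f u t) = fun t => (Real.sinh t, Real.cosh t, deriv f u) :=
      funext fun t => hru u t
    have h : HasDerivAt (fun t => (Real.sinh t, Real.cosh t, deriv f u))
        (Real.cosh v, Real.sinh v, 0) v :=
      (Real.hasDerivAt_sinh v).prodMk ((Real.hasDerivAt_cosh v).prodMk (hasDerivAt_const _ _))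
    rw [r_uv, heq]; exact h.deriv
  have hrvv : ∀ u v : ℝ, r_vv f u v = (u * Real.sinh v, u * Real.cosh v, 0) := by
    intro u v
    have heq : (fun t => r_v f u t) = fun t => (u * Real.cosh t, u * Real.sinh t, 0) :=
      funext fun t => hrv u t
    have h : HasDerivAt (fun t => ((u * Real.cosh t, u * Real.sinh t, 0) : ℝ × ℝ × ℝ))
        (u * Real.sinh v, u * Real.cosh v, 0) v :=
      ((Real.hasDerivAt_cosh v).const_mul u).prodMk
        (((Real.hasDerivAt_sinh v).const_mul u).prodMk (hasDerivAt_const _ _))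
    rw [r_vv, heq]; exact h.deriv
  have key : ∀ u ∈ Set.Ioi (0 : ℝ), ∀ v : ℝ,
      Lc f u v = -(deriv (deriv f) u) ∧
      Mc f u v = 0 ∧
      Nc f u v = u * deriv f u ∧
      Lc f u v * Nc f u v - (Mc f u v) ^ 2 = -u * deriv f u * deriv (deriv f) u := by
    intro u hu v
    have hu0 : (0 : ℝ) < u := hu
    have hune : u ≠ 0 := ne_of_gt hu0
    have hcs : Real.cosh v ^ 2 = Real.sinh v ^ 2 + 1 := Real.cosh_sq v
    have hW : Wc f u v = -u ^ 2 := by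
      rw [Wc, hru, hrv]; simp only [sip]; nlinarith [hcs]
    have hsW : Real.sqrt |Wc f u v| = u := by
      rw [hW, abs_neg, abs_of_nonneg (sq_nonneg u), Real.sqrt_sq hu0.le]
    have hL : Lc f u v = -(deriv (deriv f) u) := by
      rw [Lc, hruu, hru, hrv, hsW, det3]
      simp only [vec3, Matrix.det_fin_three, Matrix.of_apply, Matrix.cons_val',
        Matrix.cons_val_zero, Matrix.cons_val_one, Matrix.head_cons,
        Matrix.empty_val', Matrix.cons_val_fin_one, Matrix.head_fin_const,
        Matrix.cons_val_two, Matrix.tail_cons]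
      field_simp
      linear_combination (-(deriv (deriv f) u * u)) * hcs
    have hM : Mc f u v = 0 := by
      rw [Mc, hruv, hru, hrv, hsW, det3]
      simp only [vec3, Matrix.det_fin_three, Matrix.of_apply, Matrix.cons_val',
        Matrix.cons_val_zero, Matrix.cons_val_one, Matrix.head_cons,
        Matrix.empty_val', Matrix.cons_val_fin_one, Matrix.head_fin_const,
        Matrix.cons_val_two, Matrix.tail_cons]
      rw [div_eq_zero_iff]; left; ring
    have hN : Nc f u v = u * deriv f u := by
      rw [Nc, hrvv, hru, hrv, hsW, det3]
      simp only [vec3, Matrix.det_fin_three, Matrix.of_apply, Matrix.cons_val',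
        Matrix.cons_val_zero, Matrix.cons_val_one, Matrix.head_cons,
        Matrix.empty_val', Matrix.cons_val_fin_one, Matrix.head_fin_const,
        Matrix.cons_val_two, Matrix.tail_cons]
      field_simp
      linear_combination (u * deriv f u) * hcs
    refine ⟨hL, hM, hN, ?_⟩
    rw [hL, hM, hN]; ring
  refine ⟨key, ?_⟩
  constructor
  · intro h u hu
    have hu0 : (0 : ℝ) < u := hu
    have h1 := h u hu 0
    have h2 := (key u hu 0).2.2.2
    intro hc
    apply h1
    rw [h2]
    have : deriv f u * deriv (deriv f) u = 0 := hc
    nlinarith [this]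
  · intro h u hu v
    have hu0 : (0 : ℝ) < u := hu
    have h2 := (key u hu v).2.2.2
    rw [h2]
    intro hc
    apply h u hu
    have : -u * (deriv f u * deriv (deriv f) u) = 0 := by linarith [hc]; 
    rcases mul_eq_zero.mp this with h3 | h3
    · exact absurd (neg_eq_zero.mp h3) (ne_of_gt hu0)
    · exact h3
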